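/- Under Assumption A(ρ) with 0 < ρ ≤ 2 and X_0 = 0 almost surely, let K satisfy Assumption (K) or (K̃) as well as ker(ρ∨1), let (b_n)_{n≥1} be positive reals with b_n → 0 and n·b_n → ∞, and fix u ∈ (0,1) and s ∈ {1,…,T}. Then there exists a constant C > 0 such that for all n large enough, E[|J_n|] ≤ C · √(n·b_n) · (A_n/(n·b_n) + b_n^{ρ∧1}), where A_n = 1 if K satisfies (K̃) and A_n = log n if K satisfies (K). -/

import Mathlib

open MeasureTheory ProbabilityTheory Filter Set
open scoped ProbabilityTheory

noncomputable section

/-- The largest integer strictly smaller than a positive real `ρ`. -/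
def lint (ρ : ℝ) : ℕ := ⌈ρ⌉₊ - 1

/-- A function is of class `C^ρ` on `[0,1]`: it is `lint ρ` times continuously
differentiable there and its `lint ρ`-th derivative is `(ρ - lint ρ)`-Hölder. -/
def CHolder (ρ : ℝ) (f : ℝ → ℝ) : Prop :=
  ContDiffOn ℝ (lint ρ) f (Set.Icc 0 1) ∧
  ∃ C : ℝ, 0 ≤ C ∧ ∀ u ∈ Set.Icc (0:ℝ) 1, ∀ v ∈ Set.Icc (0:ℝ) 1,
    |iteratedDerivWithin (lint ρ) f (Set.Icc 0 1) u -
      iteratedDerivWithin (lint ρ) f (Set.Icc 0 1) v| ≤ C * |u - v| ^ (ρ - (lint ρ : ℝ))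

/-- Assumption (K): a Borel, bounded, even kernel with unit integral whose tails
decay faster than some exponential. -/
def AssumpK (K : ℝ → ℝ) : Prop :=
  Measurable K ∧ (∃ M : ℝ, ∀ x, |K x| ≤ M) ∧ (∀ x, K (-x) = K x) ∧
  (∫ t : ℝ, K t) = 1 ∧
  ∃ β : ℝ, 0 < β ∧
    Tendsto (fun t => Real.exp (β * |t|) * K t) (cocompact ℝ) (nhds 0)

/-- Assumption (K̃): a Borel, bounded, even kernel with unit integral and
compact support. -/
def AssumpKt (K : ℝ → ℝ) : Prop :=
  Measurable K ∧ (∃ M : ℝ, ∀ x, |K x| ≤ M) ∧ (∀ x, K (-x) = K x) ∧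
  (∫ t : ℝ, K t) = 1 ∧
  ∃ B : ℝ, 0 < B ∧ ∀ t : ℝ, B < |t| → K t = 0

/-- Assumption ker(r): moment integrability, vanishing moments up to `lint r - 1`,
boundedness and Lipschitz continuity. -/
def AssumpKer (r : ℝ) (K : ℝ → ℝ) : Prop :=
  Integrable (fun x => (|x| ^ r + 1) * |K x|) ∧
  (∀ p : ℕ, 1 ≤ p → p ≤ lint r - 1 → (∫ x : ℝ, x ^ p * K x) = 0) ∧
  (∃ M : ℝ, ∀ x, |K x| ≤ M) ∧ (∃ L : NNReal, LipschitzWith L K)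

/-!
Since `Aₙ ≥ 0`, it suffices to show `E|Jₙ| = O(√(n bₙ) · bₙ^(ρ∧1))`.

Since `X₀ = 0` and `|aₜ| ≤ α < 1`, Minkowski's inequality along the recursion bounds
`‖Xₜ‖₂ ≤ ‖ξ₀‖₂ / (1 - α)` uniformly in `n` and `t`. Writing `zⱼ = (xⱼ - u) / bₙ` for the grid
points `xⱼ = (s + jT)/(nT)`, Hölder continuity of `aₛ` of order `ρ ∧ 1` gives
`|aₛ(xⱼ) - aₛ(u)| ≤ C bₙ^(ρ∧1) |zⱼ|^(ρ∧1)`. The `zⱼ` form an arithmetic progression of step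
`1/(n bₙ)` and `|K z| |z|^(ρ∧1)` decays exponentially, so `∑ⱼ |K zⱼ| |zⱼ|^(ρ∧1) = O(n bₙ)`.
Dividing by `√(n bₙ)` gives the bound.
-/

open scoped ENNReal

lemma lint_eq_zero {ρ : ℝ} (h1 : ρ ≤ 1) : lint ρ = 0 := by
  have : ⌈ρ⌉₊ ≤ 1 := Nat.ceil_le.2 (by exact_mod_cast h1)
  unfold lint; omega

lemma lint_eq_one {ρ : ℝ} (h1 : 1 < ρ) (h2 : ρ ≤ 2) : lint ρ = 1 := by
  have : ⌈ρ⌉₊ ≤ 2 := Nat.ceil_le.2 (by exact_mod_cast h2)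
  have : 1 < ⌈ρ⌉₊ := Nat.lt_ceil.2 (by exact_mod_cast h1)
  unfold lint; omega

lemma CHolder.exists_abs_sub_le {ρ : ℝ} {f : ℝ → ℝ} (hf : CHolder ρ f) (h2 : ρ ≤ 2) :
    ∃ C, 0 ≤ C ∧ ∀ x ∈ Icc (0 : ℝ) 1, ∀ y ∈ Icc (0 : ℝ) 1,
      |f x - f y| ≤ C * |x - y| ^ min ρ 1 := by
  rcases le_or_gt ρ 1 with h1 | h1
  · obtain ⟨C, hC0, hC⟩ := hf.2
    refine ⟨C, hC0, fun x hx y hy => ?_⟩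
    simpa [lint_eq_zero h1, min_eq_left h1] using hC x hx y hy
  · have hf1 : ContDiffOn ℝ 1 f (Icc 0 1) := by simpa [lint_eq_one h1 h2] using hf.1
    obtain ⟨L, hL⟩ := hf1.exists_lipschitzOnWith one_ne_zero (convex_Icc 0 1) isCompact_Icc
    refine ⟨L, L.2, fun x hx y hy => ?_⟩
    simpa [min_eq_right h1.le, Real.dist_eq] using hL.dist_le_mul x hx y hy

lemma exists_abs_le_mul_exp_of_eventually {K : ℝ → ℝ} {M β : ℝ} (hβ : 0 ≤ β)
    (hM : ∀ z, |K z| ≤ M) (hK : ∀ᶠ z in cocompact ℝ, |K z| ≤ Real.exp (-(β * |z|))) :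
    ∃ D, 0 < D ∧ ∀ z, |K z| ≤ D * Real.exp (-(β * |z|)) := by
  obtain ⟨R, hR⟩ := (Metric.mem_cocompact_iff_closedBall_compl_subset 0).1 hK
  have hD : 1 ≤ max M 1 * Real.exp (β * |R|) :=
    one_le_mul_of_one_le_of_one_le (le_max_right M 1) (Real.one_le_exp (by positivity))
  refine ⟨max M 1 * Real.exp (β * |R|), by positivity, fun z => ?_⟩
  by_cases hz : z ∈ Metric.closedBall 0 R
  · have hzR : |z| ≤ |R| := by
      rw [mem_closedBall_zero_iff, Real.norm_eq_abs] at hz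
      exact hz.trans (le_abs_self R)
    calc |K z| ≤ max M 1 * 1 := by simpa using (hM z).trans (le_max_left M 1)
      _ ≤ max M 1 * (Real.exp (β * |R|) * Real.exp (-(β * |z|))) := by
          gcongr
          rw [← Real.exp_add]
          exact Real.one_le_exp (by nlinarith [abs_nonneg z])
      _ = _ := by ring
  · calc |K z| ≤ 1 * Real.exp (-(β * |z|)) := by simpa using hR hz
      _ ≤ _ := mul_le_mul_of_nonneg_right hD (Real.exp_pos _).le

lemma exists_abs_le_mul_exp {K : ℝ → ℝ} (hK : AssumpK K ∨ AssumpKt K) :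
    ∃ D β, 0 < D ∧ 0 < β ∧ ∀ z, |K z| ≤ D * Real.exp (-(β * |z|)) := by
  obtain ⟨M, hM⟩ : ∃ M, ∀ z, |K z| ≤ M := hK.elim (·.2.1) (·.2.1)
  obtain ⟨β, hβ, htail⟩ :
      ∃ β, 0 < β ∧ ∀ᶠ z in cocompact ℝ, |K z| ≤ Real.exp (-(β * |z|)) := by
    rcases hK with ⟨-, -, -, -, β, hβ, hlim⟩ | ⟨-, -, -, -, B, -, hB⟩
    · refine ⟨β, hβ, (hlim.eventually (Metric.ball_mem_nhds 0 one_pos)).mono fun z hz => ?_⟩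
      simp only [Real.dist_eq, sub_zero, abs_mul, abs_of_pos (Real.exp_pos _)] at hz
      calc |K z| = Real.exp (-(β * |z|)) * (Real.exp (β * |z|) * |K z|) := by
            rw [← mul_assoc, ← Real.exp_add]; simp
        _ ≤ Real.exp (-(β * |z|)) * 1 := by gcongr
        _ = _ := mul_one _
    · refine ⟨1, one_pos, (tendsto_norm_cocompact_atTop.eventually_gt_atTop B).mono
        fun z hz => ?_⟩
      rw [hB z hz, abs_zero]
      positivity
  obtain ⟨D, hD, hKD⟩ := exists_abs_le_mul_exp_of_eventually hβ.le hM htail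
  exact ⟨D, β, hD, hβ, hKD⟩

lemma rpow_le_one_add {x γ : ℝ} (hx : 0 ≤ x) (hγ0 : 0 ≤ γ) (hγ1 : γ ≤ 1) :
    x ^ γ ≤ 1 + x := by
  rcases le_or_gt x 1 with h | h
  · linarith [Real.rpow_le_one hx h hγ0]
  · linarith [Real.rpow_le_self_of_one_le h.le hγ1]

lemma one_add_le_mul_exp {β t : ℝ} (hβ : 0 < β) (ht : 0 ≤ t) :
    1 + t ≤ (1 + 2 / β) * Real.exp (β / 2 * t) := by
  have h1 : 1 ≤ Real.exp (β / 2 * t) := Real.one_le_exp (by positivity)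
  have h2 : β / 2 * t + 1 ≤ Real.exp (β / 2 * t) := Real.add_one_le_exp _
  have h3 : t ≤ 2 / β * Real.exp (β / 2 * t) := by
    rw [div_mul_eq_mul_div, le_div_iff₀ hβ]; linarith
  linarith

lemma exists_abs_mul_rpow_le_exp {K : ℝ → ℝ} (hK : AssumpK K ∨ AssumpKt K) {γ : ℝ}
    (hγ0 : 0 ≤ γ) (hγ1 : γ ≤ 1) :
    ∃ c δ, 0 < c ∧ 0 < δ ∧ ∀ z, |K z| * |z| ^ γ ≤ c * Real.exp (-(δ * |z|)) := by
  obtain ⟨D, β, hD, hβ, hKD⟩ := exists_abs_le_mul_exp hK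
  refine ⟨D * (1 + 2 / β), β / 2, by positivity, by positivity, fun z => ?_⟩
  calc |K z| * |z| ^ γ
      ≤ D * Real.exp (-(β * |z|)) * ((1 + 2 / β) * Real.exp (β / 2 * |z|)) :=
        mul_le_mul (hKD z) ((rpow_le_one_add (abs_nonneg z) hγ0 hγ1).trans
          (one_add_le_mul_exp hβ (abs_nonneg z))) (by positivity) (by positivity)
    _ = D * (1 + 2 / β) * (Real.exp (-(β * |z|)) * Real.exp (β / 2 * |z|)) := by ring
    _ = D * (1 + 2 / β) * Real.exp (-(β / 2 * |z|)) := by rw [← Real.exp_add]; ring_nf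

lemma hasSum_pow_natAbs {r : ℝ} (h0 : 0 ≤ r) (h1 : r < 1) :
    HasSum (fun k : ℤ => r ^ k.natAbs) ((1 + r) / (1 - r)) := by
  have hg := hasSum_geometric_of_lt_one h0 h1
  have hneg : HasSum (fun n : ℕ => r ^ (-((n : ℤ) + 1)).natAbs) (r * (1 - r)⁻¹) := by
    refine (hg.mul_left r).congr_fun fun n => ?_
    rw [show (-((n : ℤ) + 1)).natAbs = n + 1 by omega, pow_succ']
  have := HasSum.of_nat_of_neg_add_one (f := fun k : ℤ => r ^ k.natAbs) (by simpa using hg) hneg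
  convert this using 1
  field_simp [(sub_pos.2 h1).ne']

lemma sum_range_pow_natAbs_sub_le {r : ℝ} (h0 : 0 ≤ r) (h1 : r < 1) (m : ℤ) (n : ℕ) :
    ∑ j ∈ Finset.range n, r ^ ((j : ℤ) - m).natAbs ≤ (1 + r) / (1 - r) := by
  have hs := ((Equiv.subRight m).hasSum_iff (f := fun k : ℤ => r ^ k.natAbs)).2
    (hasSum_pow_natAbs h0 h1)
  calc ∑ j ∈ Finset.range n, r ^ ((j : ℤ) - m).natAbs
      = ∑ k ∈ (Finset.range n).image ((↑) : ℕ → ℤ),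
          ((fun k : ℤ => r ^ k.natAbs) ∘ Equiv.subRight m) k := by
        rw [Finset.sum_image fun _ _ _ _ h => Nat.cast_injective h]; rfl
    _ ≤ _ := sum_le_hasSum _ (fun _ _ => pow_nonneg h0 _) hs

/-- Rounding `-c / d` to an integer `m` gives `|c + j d| ≥ d (|j - m| - 1/2)`, so the terms are
dominated by a two-sided geometric series of ratio `exp (-δ d)`. -/
lemma sum_range_exp_neg_abs_le {δ d : ℝ} (hδ : 0 < δ) (hd : 0 < d) (hδd : δ * d ≤ 1) (c : ℝ)
    (n : ℕ) : ∑ j ∈ Finset.range n, Real.exp (-(δ * |c + j * d|)) ≤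
      2 * Real.exp (3 / 2) / (δ * d) := by
  set x := δ * d
  have hx : 0 < x := mul_pos hδ hd
  set r := Real.exp (-x)
  set m := round (-c / d)
  have hterm (j : ℕ) :
      Real.exp (-(δ * |c + j * d|)) ≤ Real.exp (x / 2) * r ^ ((j : ℤ) - m).natAbs := by
    have hround : |(j : ℝ) - m| ≤ |(j : ℝ) - -c / d| + 1 / 2 := by
      have := abs_sub_round (-c / d)
      calc |(j : ℝ) - m| ≤ |(j : ℝ) - -c / d| + |-c / d - m| := abs_sub_le _ _ _
        _ ≤ _ := by gcongr
    have hscale : d * |(j : ℝ) - -c / d| = |c + j * d| := by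
      rw [← abs_of_pos hd, ← abs_mul, abs_of_pos hd]
      congr 1
      field_simp
      ring
    have hk : (((j : ℤ) - m).natAbs : ℝ) = |(j : ℝ) - m| := by
      rw [Nat.cast_natAbs]; push_cast; rfl
    rw [← Real.exp_nat_mul, ← Real.exp_add, Real.exp_le_exp, hk]
    nlinarith [mul_le_mul_of_nonneg_left hround hd.le]
  -- `1 - r ≥ x r` because `1 + x ≤ exp x`
  have hgeom : (1 + r) / (1 - r) ≤ 2 * Real.exp x / x := by
    have hr1 : r < 1 := Real.exp_lt_one_iff.2 (by linarith)
    have hrx : r * Real.exp x = 1 := by rw [← Real.exp_add]; simp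
    have := Real.add_one_le_exp x
    rw [div_le_div_iff₀ (by linarith) hx]
    nlinarith [Real.exp_pos (-x)]
  calc ∑ j ∈ Finset.range n, Real.exp (-(δ * |c + j * d|))
      ≤ ∑ j ∈ Finset.range n, Real.exp (x / 2) * r ^ ((j : ℤ) - m).natAbs :=
        Finset.sum_le_sum fun j _ => hterm j
    _ = Real.exp (x / 2) * ∑ j ∈ Finset.range n, r ^ ((j : ℤ) - m).natAbs :=
        (Finset.mul_sum _ _ _).symm
    _ ≤ Real.exp (x / 2) * (2 * Real.exp x / x) := by
        gcongr
        exact (sum_range_pow_natAbs_sub_le (Real.exp_pos _).le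
          (Real.exp_lt_one_iff.2 (by linarith)) m n).trans hgeom
    _ = 2 * Real.exp (3 / 2 * x) / x := by
        rw [mul_div_assoc', mul_left_comm, ← Real.exp_add]; ring_nf
    _ ≤ 2 * Real.exp (3 / 2) / x := by gcongr; linarith

lemma sum_range_grid_le_of_le_exp {g : ℝ → ℝ} {c δ : ℝ} (hc : 0 ≤ c) (hδ : 0 < δ)
    (hg : ∀ z, g z ≤ c * Real.exp (-(δ * |z|))) {n T : ℕ} (s : ℕ) (hT : 1 ≤ T) (u : ℝ)
    {h : ℝ} (hh : 0 < h) (hδnh : δ ≤ n * h) :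
    ∑ j ∈ Finset.range n, g ((((s + j * T : ℕ) : ℝ) / (n * T) - u) / h) ≤
      2 * Real.exp (3 / 2) * c / δ * (n * h) := by
  have hnh : 0 < (n : ℝ) * h := hδ.trans_le hδnh
  have hn : (0 : ℝ) < n := pos_of_mul_pos_left hnh hh.le
  have hT0 : (0 : ℝ) < T := by exact_mod_cast hT
  have hgrid (j : ℕ) : (((s + j * T : ℕ) : ℝ) / (n * T) - u) / h =
      ((s : ℝ) / (n * T) - u) / h + j * (n * h)⁻¹ := by
    push_cast
    field_simp
    ring
  calc ∑ j ∈ Finset.range n, g ((((s + j * T : ℕ) : ℝ) / (n * T) - u) / h)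
      ≤ ∑ j ∈ Finset.range n,
          c * Real.exp (-(δ * |((s : ℝ) / (n * T) - u) / h + j * (n * h)⁻¹|)) :=
        Finset.sum_le_sum fun j _ => hgrid j ▸ hg _
    _ = c * ∑ j ∈ Finset.range n,
          Real.exp (-(δ * |((s : ℝ) / (n * T) - u) / h + j * (n * h)⁻¹|)) :=
        (Finset.mul_sum _ _ _).symm
    _ ≤ c * (2 * Real.exp (3 / 2) / (δ * (n * h)⁻¹)) := by
        gcongr
        refine sum_range_exp_neg_abs_le hδ (by positivity) ?_ _ n
        rwa [← div_eq_mul_inv, div_le_one hnh]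
    _ = 2 * Real.exp (3 / 2) * c / δ * (n * h) := by field_simp

lemma memLp_and_eLpNorm_le_of_recursion {Ω E : Type*} [MeasurableSpace Ω] {μ : Measure Ω}
    [NormedAddCommGroup E] [NormedSpace ℝ E] {p : ℝ≥0∞} (hp : 1 ≤ p) {Z ξ : ℕ → Ω → E}
    {c : ℕ → ℝ} {α σ : ℝ} {m : ℕ} (hα0 : 0 ≤ α) (hα1 : α < 1) (hσ : 0 ≤ σ)
    (hZ0 : Z 0 =ᵐ[μ] 0) (hZ : ∀ t < m, Z (t + 1) = c (t + 1) • Z t + ξ (t + 1))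
    (hc : ∀ t < m, |c (t + 1)| ≤ α) (hξ : ∀ t, MemLp (ξ t) p μ)
    (hξσ : ∀ t, eLpNorm (ξ t) p μ ≤ ENNReal.ofReal σ) :
    ∀ t ≤ m, MemLp (Z t) p μ ∧ eLpNorm (Z t) p μ ≤ ENNReal.ofReal (σ / (1 - α)) := by
  intro t
  induction t with
  | zero =>
    intro _
    exact ⟨MemLp.zero.ae_eq hZ0.symm, by rw [eLpNorm_congr_ae hZ0, eLpNorm_zero]; positivity⟩
  | succ t ih =>
    intro ht
    obtain ⟨hZt, hnorm⟩ := ih (by omega)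
    rw [hZ t (by omega)]
    refine ⟨(hZt.const_smul _).add (hξ _), ?_⟩
    calc eLpNorm (c (t + 1) • Z t + ξ (t + 1)) p μ
        ≤ eLpNorm (c (t + 1) • Z t) p μ + eLpNorm (ξ (t + 1)) p μ :=
          eLpNorm_add_le (hZt.const_smul _).1 (hξ _).1 hp
      _ ≤ ENNReal.ofReal α * ENNReal.ofReal (σ / (1 - α)) + ENNReal.ofReal σ := by
          rw [eLpNorm_const_smul, Real.enorm_eq_ofReal_abs]
          gcongr
          · exact hc t (by omega)
          · exact hξσ _
      _ = ENNReal.ofReal (σ / (1 - α)) := by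
          have : 1 - α ≠ 0 := (sub_pos.2 hα1).ne'
          rw [← ENNReal.ofReal_mul hα0, ← ENNReal.ofReal_add (by positivity) hσ]
          congr 1
          field_simp
          ring

lemma integral_sq_le_of_eLpNorm_le {Ω : Type*} [MeasurableSpace Ω] {μ : Measure Ω}
    {f : Ω → ℝ} (hf : MemLp f 2 μ) {B : ℝ} (hB : 0 ≤ B) (h : eLpNorm f 2 μ ≤ ENNReal.ofReal B) :
    ∫ ω, f ω ^ 2 ∂μ ≤ B ^ 2 := by
  rw [hf.eLpNorm_eq_integral_rpow_norm two_ne_zero ENNReal.ofNat_ne_top,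
    ENNReal.ofReal_le_ofReal_iff hB] at h
  have := (Real.rpow_inv_le_iff_of_pos (x := ∫ ω, ‖f ω‖ ^ (2 : ℝ) ∂μ)
    (integral_nonneg fun _ => by positivity) hB two_pos).1 (by simpa using h)
  simpa [Real.norm_eq_abs, sq_abs] using this

lemma exists_integral_sq_le_of_recursion {Ω : Type*} [MeasurableSpace Ω] {μ : Measure Ω}
    {T : ℕ} {a : ℤ → ℝ → ℝ} {α : ℝ} (hα1 : α < 1)
    (hbdd : ∀ (t : ℤ), ∀ v ∈ Icc (0 : ℝ) 1, |a t v| ≤ α) {ξ : ℕ → Ω → ℝ}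
    (hξid : ∀ t, IdentDistrib (ξ t) (ξ 0) μ μ) (hξsq : Integrable (fun ω => ξ 0 ω ^ 2) μ)
    {X : ℕ → ℕ → Ω → ℝ} (hXinit : ∀ n, ∀ᵐ ω ∂μ, X n 0 ω = 0)
    (hXrec : ∀ n t, 1 ≤ t → t ≤ n * T →
      ∀ ω, X n t ω = a (t : ℤ) ((t : ℝ) / ((n : ℝ) * T)) * X n (t - 1) ω + ξ t ω) :
    ∃ M, ∀ n t, t ≤ n * T →
      Integrable (fun ω => X n t ω ^ 2) μ ∧ ∫ ω, X n t ω ^ 2 ∂μ ≤ M := by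
  have hα0 : 0 ≤ α := (abs_nonneg _).trans (hbdd 0 0 ⟨le_rfl, zero_le_one⟩)
  have hξ0 : MemLp (ξ 0) 2 μ :=
    (memLp_two_iff_integrable_sq (hξid 0).aemeasurable_fst.aestronglyMeasurable).2 hξsq
  set σ := (eLpNorm (ξ 0) 2 μ).toReal
  have hξσ (t : ℕ) : eLpNorm (ξ t) 2 μ ≤ ENNReal.ofReal σ := by
    rw [(hξid t).eLpNorm_eq, ENNReal.ofReal_toReal hξ0.eLpNorm_ne_top]
  refine ⟨(σ / (1 - α)) ^ 2, fun n t ht => ?_⟩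
  have hc (t : ℕ) (ht : t < n * T) : |a (t + 1 : ℕ) ((t + 1 : ℕ) / ((n : ℝ) * T))| ≤ α :=
    hbdd _ _ ⟨by positivity, div_le_one_of_le₀ (by exact_mod_cast ht) (by positivity)⟩
  obtain ⟨hLp, hnorm⟩ := memLp_and_eLpNorm_le_of_recursion (Z := X n)
    (c := fun t => a t (t / ((n : ℝ) * T))) one_le_two hα0 hα1 ENNReal.toReal_nonneg
    (hXinit n) (fun t ht => funext fun ω => by simpa using hXrec n (t + 1) (by omega) ht ω) hc
    (fun t => (hξid t).symm.memLp_snd hξ0) hξσ t ht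
  exact ⟨hLp.integrable_sq, integral_sq_le_of_eLpNorm_le hLp (by positivity) hnorm⟩

lemma integral_abs_le_of_abs_le_sum {ι Ω : Type*} [MeasurableSpace Ω] {μ : Measure Ω}
    (s : Finset ι) {f : Ω → ℝ} {g : ι → Ω → ℝ} {w : ι → ℝ} {M : ℝ}
    (hw : ∀ i ∈ s, 0 ≤ w i) (hg : ∀ i ∈ s, Integrable (g i) μ)
    (hgM : ∀ i ∈ s, ∫ ω, g i ω ∂μ ≤ M) (hf : ∀ᵐ ω ∂μ, |f ω| ≤ ∑ i ∈ s, w i * g i ω) :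
    ∫ ω, |f ω| ∂μ ≤ M * ∑ i ∈ s, w i := by
  calc ∫ ω, |f ω| ∂μ ≤ ∫ ω, ∑ i ∈ s, w i * g i ω ∂μ :=
        integral_mono_of_nonneg (ae_of_all _ fun _ => abs_nonneg _)
          (integrable_finsetSum _ fun i hi => (hg i hi).const_mul _) hf
    _ = ∑ i ∈ s, w i * ∫ ω, g i ω ∂μ := by
        rw [integral_finsetSum _ fun i hi => (hg i hi).const_mul _]
        simp_rw [integral_const_mul]
    _ ≤ ∑ i ∈ s, w i * M := Finset.sum_le_sum fun i hi => by gcongr; exacts [hw i hi, hgM i hi]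
    _ = M * ∑ i ∈ s, w i := by rw [Finset.mul_sum]; simp_rw [mul_comm]

lemma abs_sum_kernel_mul_sub_le {ι : Type*} (s : Finset ι) (K : ℝ → ℝ) {f : ℝ → ℝ}
    {C γ h u : ℝ} (hh : 0 < h) {x y : ι → ℝ}
    (hf : ∀ i ∈ s, |f (x i) - f u| ≤ C * |x i - u| ^ γ) :
    |∑ i ∈ s, K ((x i - u) / h) * y i ^ 2 * (f (x i) - f u)| ≤
      C * h ^ γ * ∑ i ∈ s, |K ((x i - u) / h)| * |(x i - u) / h| ^ γ * y i ^ 2 := by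
  refine (Finset.abs_sum_le_sum_abs _ _).trans ?_
  rw [Finset.mul_sum]
  refine Finset.sum_le_sum fun i hi => ?_
  have hscale : |x i - u| ^ γ = h ^ γ * |(x i - u) / h| ^ γ := by
    rw [← Real.mul_rpow hh.le (abs_nonneg _), abs_div, abs_of_pos hh, mul_div_cancel₀ _ hh.ne']
  rw [abs_mul, abs_mul, abs_sq]
  calc |K ((x i - u) / h)| * y i ^ 2 * |f (x i) - f u|
      ≤ |K ((x i - u) / h)| * y i ^ 2 * (C * |x i - u| ^ γ) := by gcongr; exact hf i hi
    _ = _ := by rw [hscale]; ring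

lemma integral_abs_sum_kernel_mul_sub_le {Ω : Type*} [MeasurableSpace Ω] {μ : Measure Ω}
    {K f : ℝ → ℝ} {Y : ℕ → Ω → ℝ} {n T s : ℕ} {u h C γ c δ M : ℝ} (hT : 1 ≤ T) (hsT : s ≤ T)
    (hu : u ∈ Icc (0 : ℝ) 1) (hh : 0 < h) (hc : 0 ≤ c) (hδ : 0 < δ) (hδnh : δ ≤ n * h)
    (hC : 0 ≤ C) (hf : ∀ x ∈ Icc (0 : ℝ) 1, ∀ y ∈ Icc (0 : ℝ) 1, |f x - f y| ≤ C * |x - y| ^ γ)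
    (hKc : ∀ z, |K z| * |z| ^ γ ≤ c * Real.exp (-(δ * |z|)))
    (hY : ∀ j < n, Integrable (fun ω => Y j ω ^ 2) μ ∧ ∫ ω, Y j ω ^ 2 ∂μ ≤ M) :
    ∫ ω, |∑ j ∈ Finset.range n, K ((((s + j * T : ℕ) : ℝ) / (n * T) - u) / h) * Y j ω ^ 2 *
        (f (((s + j * T : ℕ) : ℝ) / (n * T)) - f u)| ∂μ ≤
      M * C * h ^ γ * (2 * Real.exp (3 / 2) * c / δ * (n * h)) := by
  set x : ℕ → ℝ := fun j => ((s + j * T : ℕ) : ℝ) / (n * T)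
  set k : ℕ → ℝ := fun j => |K ((x j - u) / h)| * |(x j - u) / h| ^ γ
  have hn : 0 < n := by exact_mod_cast pos_of_mul_pos_left (hδ.trans_le hδnh) hh.le
  have hM : 0 ≤ M := (integral_nonneg fun _ => sq_nonneg _).trans (hY 0 hn).2
  have hCh : 0 ≤ C * h ^ γ := mul_nonneg hC (Real.rpow_nonneg hh.le γ)
  have hx (j : ℕ) (hj : j ∈ Finset.range n) : x j ∈ Icc (0 : ℝ) 1 := by
    have : s + j * T ≤ n * T := by nlinarith [Finset.mem_range.1 hj]
    exact ⟨by positivity, div_le_one_of_le₀ (by exact_mod_cast this) (by positivity)⟩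
  have hsum (ω : Ω) : |∑ j ∈ Finset.range n, K ((x j - u) / h) * Y j ω ^ 2 * (f (x j) - f u)| ≤
      ∑ j ∈ Finset.range n, C * h ^ γ * k j * Y j ω ^ 2 := by
    refine (abs_sum_kernel_mul_sub_le _ K hh fun j hj => hf _ (hx j hj) u hu).trans ?_
    rw [Finset.mul_sum]
    exact (Finset.sum_congr rfl fun j _ => by ring).le
  calc _ ≤ M * ∑ j ∈ Finset.range n, C * h ^ γ * k j :=
        integral_abs_le_of_abs_le_sum _ (fun j _ => by positivity)
          (fun j hj => (hY j (Finset.mem_range.1 hj)).1)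
          (fun j hj => (hY j (Finset.mem_range.1 hj)).2) (ae_of_all _ hsum)
    _ = M * C * h ^ γ * ∑ j ∈ Finset.range n, k j := by rw [← Finset.mul_sum]; ring
    _ ≤ _ := by gcongr; exact sum_range_grid_le_of_le_exp hc hδ hKc s hT u hh hδnh

theorem statement15_general
    {Ω : Type*} [MeasureSpace Ω]
    (T : ℕ) (hT : 1 ≤ T) (ρ : ℝ) (hρ0 : 0 < ρ) (hρ2 : ρ ≤ 2)
    -- Assumption A(ρ)
    (a : ℤ → ℝ → ℝ) (α : ℝ) (hα1 : α < 1)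
    (hbdd : ∀ (t : ℤ), ∀ v ∈ Set.Icc (0:ℝ) 1, |a t v| ≤ α)
    (hreg : ∀ t : ℤ, CHolder ρ (a t))
    -- the i.i.d. innovations, with mean 0 and variance σ² ∈ (0,∞)
    (ξ : ℕ → Ω → ℝ)
    (hξid : ∀ t, IdentDistrib (ξ t) (ξ 0) ℙ ℙ)
    (hξsq : Integrable (fun ω => (ξ 0 ω) ^ 2) ℙ)
    -- the process, started from X₀ = 0 almost surely
    (X : ℕ → ℕ → Ω → ℝ)
    (hXinit : ∀ n, ∀ᵐ ω ∂ℙ, X n 0 ω = 0)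
    (hXrec : ∀ n t, 1 ≤ t → t ≤ n * T →
      ∀ ω, X n t ω = a (t : ℤ) ((t : ℝ) / ((n : ℝ) * T)) * X n (t - 1) ω + ξ t ω)
    -- the kernel, the bandwidths and the constants Aₙ
    (K : ℝ → ℝ) (hK : AssumpK K ∨ AssumpKt K)
    (b : ℕ → ℝ) (hbpos : ∀ n, 0 < b n)
    (hnb : Tendsto (fun n : ℕ => (n : ℝ) * b n) atTop atTop)
    (A : ℕ → ℝ)
    (hKA : (AssumpKt K ∧ ∀ n, A n = 1) ∨ (AssumpK K ∧ ∀ n : ℕ, A n = Real.log n))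
    -- the point of estimation and the phase
    (u : ℝ) (hu : u ∈ Set.Ioo (0:ℝ) 1) (s : ℕ) (hsT : s ≤ T)
    -- the bias term Jₙ
    (J : ℕ → Ω → ℝ)
    (hJ : ∀ n ω, J n ω = (1 / Real.sqrt ((n : ℝ) * b n)) * ∑ j ∈ Finset.range n,
      K ((((s + j * T : ℕ) : ℝ) / ((n : ℝ) * T) - u) / b n) *
        (X n (s + j * T - 1) ω) ^ 2 *
        (a (s : ℤ) (((s + j * T : ℕ) : ℝ) / ((n : ℝ) * T)) - a (s : ℤ) u))
 :
    ∃ C : ℝ, 0 < C ∧ ∀ᶠ n : ℕ in atTop,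
      (∫ ω, |J n ω| ∂ℙ) ≤
        C * Real.sqrt ((n : ℝ) * b n) * (A n / ((n : ℝ) * b n) + b n ^ min ρ 1) := by
  obtain ⟨Ca, hCa0, hCa⟩ := (hreg s).exists_abs_sub_le hρ2
  obtain ⟨c, δ, hc, hδ, hKc⟩ :=
    exists_abs_mul_rpow_le_exp hK (le_min hρ0.le zero_le_one) (min_le_right ρ 1)
  obtain ⟨M, hM⟩ := exists_integral_sq_le_of_recursion hα1 hbdd hξid hξsq hXinit hXrec
  have hM0 : 0 ≤ M := (integral_nonneg fun _ => sq_nonneg _).trans (hM 0 0 (Nat.zero_le _)).2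
  set κ := 2 * Real.exp (3 / 2) * c / δ
  refine ⟨Ca * M * κ + 1, by positivity, ?_⟩
  filter_upwards [hnb.eventually_ge_atTop δ] with n hδn
  have hnb : 0 < (n : ℝ) * b n := hδ.trans_le hδn
  set S := √((n : ℝ) * b n) with hS_def
  have hS : 0 < S := Real.sqrt_pos.2 hnb
  have hA : 0 ≤ A n := by rcases hKA with ⟨-, h⟩ | ⟨-, h⟩ <;> simp [h, Real.log_natCast_nonneg]
  have hbγ : 0 ≤ b n ^ min ρ 1 := Real.rpow_nonneg (hbpos n).le _
  have hbias := integral_abs_sum_kernel_mul_sub_le (μ := ℙ) (Y := fun j => X n (s + j * T - 1))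
    hT hsT (Ioo_subset_Icc_self hu) (hbpos n) hc.le hδ hδn hCa0 hCa hKc
    fun j hj => hM n _ ((Nat.sub_le _ _).trans (by nlinarith))
  simp_rw [hJ, ← hS_def, abs_mul, integral_const_mul, abs_of_pos (one_div_pos.2 hS)]
  calc 1 / S * _ ≤ 1 / S * (M * Ca * b n ^ min ρ 1 * (κ * (n * b n))) := by gcongr
    _ = Ca * M * κ * (S * b n ^ min ρ 1) := by
        rw [← Real.mul_self_sqrt hnb.le, ← hS_def]; field_simp
    _ ≤ (Ca * M * κ + 1) * (S * (A n / (n * b n) + b n ^ min ρ 1)) := by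
        have : b n ^ min ρ 1 ≤ A n / (n * b n) + b n ^ min ρ 1 :=
          le_add_of_nonneg_left (div_nonneg hA hnb.le)
        gcongr
        linarith
    _ = _ := by ring

/-- Under Assumption A(ρ) with `0 < ρ ≤ 2` and `X₀ = 0` a.s., for a
kernel `K` satisfying (K) or (K̃) and ker(ρ∨1), one has, for `n` large enough,
`E|Jₙ| ≤ C √(n bₙ) (Aₙ/(n bₙ) + bₙ^{ρ∧1})`. -/
theorem statement15
    {Ω : Type*} [MeasureSpace Ω] (hprob : IsProbabilityMeasure (ℙ : Measure Ω))
    (T : ℕ) (hT : 1 ≤ T) (ρ : ℝ) (hρ0 : 0 < ρ) (hρ2 : ρ ≤ 2)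
    -- Assumption A(ρ)
    (a : ℤ → ℝ → ℝ) (α : ℝ) (hα1 : α < 1)
    (hper : ∀ (t : ℤ) (v : ℝ), a (t + T) v = a t v)
    (hbdd : ∀ (t : ℤ), ∀ v ∈ Set.Icc (0:ℝ) 1, |a t v| ≤ α)
    (hreg : ∀ t : ℤ, CHolder ρ (a t))
    -- the i.i.d. innovations, with mean 0 and variance σ² ∈ (0,∞)
    (ξ : ℕ → Ω → ℝ) (hξmeas : ∀ t, Measurable (ξ t))
    (hξindep : iIndepFun ξ ℙ)
    (hξid : ∀ t, IdentDistrib (ξ t) (ξ 0) ℙ ℙ)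
    (hξmean : ∫ ω, ξ 0 ω ∂ℙ = 0)
    (σ : ℝ) (hσ : 0 < σ)
    (hξvar : ∫ ω, (ξ 0 ω) ^ 2 ∂ℙ = σ ^ 2)
    (hξsq : Integrable (fun ω => (ξ 0 ω) ^ 2) ℙ)
    -- the process, started from X₀ = 0 almost surely
    (X : ℕ → ℕ → Ω → ℝ)
    (hXinit : ∀ n, ∀ᵐ ω ∂ℙ, X n 0 ω = 0)
    (hXrec : ∀ n t, 1 ≤ t → t ≤ n * T →
      ∀ ω, X n t ω = a (t : ℤ) ((t : ℝ) / ((n : ℝ) * T)) * X n (t - 1) ω + ξ t ω)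
    -- the kernel, the bandwidths and the constants Aₙ
    (K : ℝ → ℝ) (hK : AssumpK K ∨ AssumpKt K) (hker : AssumpKer (max ρ 1) K)
    (b : ℕ → ℝ) (hbpos : ∀ n, 0 < b n)
    (hb0 : Tendsto b atTop (nhds 0))
    (hnb : Tendsto (fun n : ℕ => (n : ℝ) * b n) atTop atTop)
    (A : ℕ → ℝ)
    (hKA : (AssumpKt K ∧ ∀ n, A n = 1) ∨ (AssumpK K ∧ ∀ n : ℕ, A n = Real.log n))
    -- the point of estimation and the phase
    (u : ℝ) (hu : u ∈ Set.Ioo (0:ℝ) 1) (s : ℕ) (hs1 : 1 ≤ s) (hsT : s ≤ T)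
    -- the bias term Jₙ
    (J : ℕ → Ω → ℝ)
    (hJ : ∀ n ω, J n ω = (1 / Real.sqrt ((n : ℝ) * b n)) * ∑ j ∈ Finset.range n,
      K ((((s + j * T : ℕ) : ℝ) / ((n : ℝ) * T) - u) / b n) *
        (X n (s + j * T - 1) ω) ^ 2 *
        (a (s : ℤ) (((s + j * T : ℕ) : ℝ) / ((n : ℝ) * T)) - a (s : ℤ) u))
 :
    ∃ C : ℝ, 0 < C ∧ ∀ᶠ n : ℕ in atTop,
      (∫ ω, |J n ω| ∂ℙ) ≤
        C * Real.sqrt ((n : ℝ) * b n) * (A n / ((n : ℝ) * b n) + b n ^ min ρ 1) :=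
  statement15_general T hT ρ hρ0 hρ2 a α hα1 hbdd hreg ξ hξid hξsq X hXinit hXrec K hK b hbpos hnb A
    hKA u hu s hsT J hJ
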